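/- arXiv:0906.4129 — 3 statements merged into one kernel-verified Lean document; each statement's English description precedes it below -/
import Mathlib

section
/- Suppose π = π₁…π_m and ρ = ρ₁…ρ_m are ±-sequences and i ∈ {1,…,m} is such that ρ_i = π_i − 1 and π_j = ρ_j for all j ≠ i. Then: (1) if φ(π) > 0 and the cogood position in π is at or before position i, then ε(ρ) = ε(π) and φ(ρ) = φ(π) − 1, and if in addition ε(π) > 0 then π and ρ have the same good position; (2) if φ(π) = 0 or the cogood position in π is strictly after position i, then ε(ρ) = ε(π) + 1 and φ(ρ) = φ(π); (3) if ε(π) > 0 and the good position in π is after position i, then π and ρ have the same good position. -/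
/-!  ±-sequences.  A ±-sequence of length `m` is modelled as a function `π : ℕ → ℤ`
whose values at positions `1,…,m` lie in `{+1, 0, -1}` (values elsewhere are irrelevant). -/

namespace PMSeq

/-- `π` is a ±-sequence of length `m`. -/
def IsPM (m : ℕ) (π : ℕ → ℤ) : Prop :=
  ∀ k, 1 ≤ k → k ≤ m → π k = 1 ∨ π k = 0 ∨ π k = -1

/-- `g_i(π) = -(π₁ + ⋯ + π_i)`, for `0 ≤ i`. -/
def g (π : ℕ → ℤ) (i : ℕ) : ℤ := -(∑ k ∈ Finset.Icc 1 i, π k)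

/-- `h_i(π) = π_i + ⋯ + π_m`, for `1 ≤ i ≤ m+1`. -/
def h (m : ℕ) (π : ℕ → ℤ) (i : ℕ) : ℤ := ∑ k ∈ Finset.Icc i m, π k

/-- `ε(π) = max{g_i(π) : 0 ≤ i ≤ m}` (note `g_0 = 0`). -/
def eps (m : ℕ) (π : ℕ → ℤ) : ℤ := (Finset.Icc 0 m).fold max 0 (g π)

/-- `φ(π) = max{h_i(π) : 1 ≤ i ≤ m+1}` (note `h_{m+1} = 0`). -/
def phi (m : ℕ) (π : ℕ → ℤ) : ℤ := (Finset.Icc 1 (m + 1)).fold max 0 (h m π)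

/-- The good position: the smallest `i` with `g_i(π) = ε(π)` (meaningful when `ε(π) > 0`). -/
noncomputable def goodPos (m : ℕ) (π : ℕ → ℤ) : ℕ :=
  sInf {i | i ≤ m ∧ g π i = eps m π}

/-- The cogood position: the largest `i ∈ {1,…,m+1}` with `h_i(π) = φ(π)`
(meaningful when `φ(π) > 0`). -/
noncomputable def cogoodPos (m : ℕ) (π : ℕ → ℤ) : ℕ :=
  sSup {i | 1 ≤ i ∧ i ≤ m + 1 ∧ h m π i = phi m π}

lemma g_zero (π : ℕ → ℤ) : g π 0 = 0 := by simp [g]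

lemma g_le_eps {m j : ℕ} (π : ℕ → ℤ) (hj : j ≤ m) : g π j ≤ eps m π :=
  (Finset.le_fold_max _).mpr (Or.inr ⟨j, Finset.mem_Icc.mpr ⟨Nat.zero_le _, hj⟩, le_rfl⟩)

lemma eps_nonneg (m : ℕ) (π : ℕ → ℤ) : 0 ≤ eps m π := by
  have := g_le_eps (m := m) (j := 0) π (Nat.zero_le _)
  rwa [g_zero] at this

lemma eps_le {m : ℕ} {π : ℕ → ℤ} {c : ℤ} (h0 : 0 ≤ c) (hb : ∀ j ≤ m, g π j ≤ c) :
    eps m π ≤ c :=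
  (Finset.fold_max_le _).mpr ⟨h0, fun j hj => hb j (Finset.mem_Icc.mp hj).2⟩

lemma exists_eps (m : ℕ) (π : ℕ → ℤ) : ∃ j ≤ m, g π j = eps m π := by
  rcases (Finset.le_fold_max _).mp (le_refl (eps m π)) with h0 | ⟨j, hj, hle⟩
  · exact ⟨0, Nat.zero_le _, by rw [g_zero]; exact le_antisymm (eps_nonneg m π) h0⟩
  · exact ⟨j, (Finset.mem_Icc.mp hj).2, le_antisymm (g_le_eps π (Finset.mem_Icc.mp hj).2) hle⟩

lemma h_eq_g {m j : ℕ} (π : ℕ → ℤ) (h1 : 1 ≤ j) (h2 : j ≤ m + 1) :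
    h m π j = g π (j - 1) - g π m := by
  have hs : Finset.Icc j m = Finset.Icc 1 m \ Finset.Icc 1 (j - 1) := by
    ext k; simp only [Finset.mem_Icc, Finset.mem_sdiff, not_and, not_le]; omega
  have hsub : Finset.Icc 1 (j - 1) ⊆ Finset.Icc 1 m := by
    intro k hk; simp only [Finset.mem_Icc] at *; omega
  rw [h, hs, Finset.sum_sdiff_eq_sub hsub, g, g]; ring

lemma phi_eq (m : ℕ) (π : ℕ → ℤ) : phi m π = eps m π - g π m := by
  apply le_antisymm
  · apply (Finset.fold_max_le _).mpr
    constructor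
    · have := g_le_eps (m := m) π le_rfl; omega
    · intro j hj
      simp only [Finset.mem_Icc] at hj
      rw [h_eq_g π hj.1 hj.2]
      have := g_le_eps (m := m) (j := j - 1) π (by omega)
      omega
  · obtain ⟨a, ha, hga⟩ := exists_eps m π
    have hmem : a + 1 ∈ Finset.Icc 1 (m + 1) := Finset.mem_Icc.mpr ⟨by omega, by omega⟩
    have hh : h m π (a + 1) = eps m π - g π m := by
      rw [h_eq_g π (by omega) (by omega)]; simp [hga]
    exact (Finset.le_fold_max _).mpr (Or.inr ⟨a + 1, hmem, hh.ge⟩)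

/-- Lemma 3.3 of the paper: if `ρ` is obtained from `π` by decreasing the entry in
position `i` by one, then the values of `ε`, `φ` and the good positions compare as stated. -/
theorem pm_decrease_entry (m : ℕ) (π ρ : ℕ → ℤ) (hπ : IsPM m π) (hρ : IsPM m ρ)
    (i : ℕ) (hi1 : 1 ≤ i) (him : i ≤ m)
    (hd : ρ i = π i - 1) (hagree : ∀ j, j ≠ i → π j = ρ j) :
    (0 < phi m π → cogoodPos m π ≤ i →
      eps m ρ = eps m π ∧ phi m ρ = phi m π - 1 ∧
      (0 < eps m π → goodPos m ρ = goodPos m π)) ∧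
    ((phi m π = 0 ∨ i < cogoodPos m π) →
      eps m ρ = eps m π + 1 ∧ phi m ρ = phi m π) ∧
    (0 < eps m π → i < goodPos m π → goodPos m ρ = goodPos m π) := by
  have grel : ∀ j, g ρ j = g π j + (if i ≤ j then 1 else 0) := by
    intro j
    have hfun : ∀ k, ρ k = π k - (if k = i then 1 else 0) := by
      intro k
      by_cases hk : k = i
      · subst hk; simp [hd]
      · simp [hk, (hagree k hk).symm]
    simp only [g, hfun, Finset.sum_sub_distrib, Finset.sum_ite_eq' (Finset.Icc 1 j) i
      (fun _ => (1 : ℤ)), Finset.mem_Icc]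
    by_cases hij : i ≤ j <;> simp [hij, hi1] <;> ring
  have grel_lt : ∀ j, j < i → g ρ j = g π j := by
    intro j hj; rw [grel]; simp [Nat.not_le.mpr hj]
  have grel_ge : ∀ j, i ≤ j → g ρ j = g π j + 1 := by
    intro j hj; rw [grel]; simp [hj]
  refine ⟨?_, ?_, ?_⟩
  · intro hphi hcg
    have hattlt : ∀ a, a ≤ m → g π a = eps m π → a < i := by
      intro a ham hga
      have hmem : a + 1 ∈ {j | 1 ≤ j ∧ j ≤ m + 1 ∧ h m π j = phi m π} := by
        refine ⟨by omega, by omega, ?_⟩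
        rw [h_eq_g π (by omega) (by omega), phi_eq]; simp [hga]
      have hbdd : BddAbove {j | 1 ≤ j ∧ j ≤ m + 1 ∧ h m π j = phi m π} :=
        ⟨m + 1, fun x hx => hx.2.1⟩
      have hle : a + 1 ≤ cogoodPos m π := le_csSup hbdd hmem
      omega
    have heps : eps m ρ = eps m π := by
      apply le_antisymm
      · apply eps_le (eps_nonneg m π)
        intro j hj
        by_cases hij : i ≤ j
        · rw [grel_ge j hij]
          have hle := g_le_eps (m := m) π hj
          have hne : g π j ≠ eps m π := fun hEq => absurd (hattlt j hj hEq) (by omega)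
          omega
        · rw [grel_lt j (by omega)]; exact g_le_eps π hj
      · obtain ⟨a, ham, hga⟩ := exists_eps m π
        have hai := hattlt a ham hga
        have hga' : g ρ a = eps m π := by rw [grel_lt a hai]; exact hga
        exact hga' ▸ g_le_eps ρ ham
    refine ⟨heps, by rw [phi_eq, phi_eq, heps, grel_ge m him]; ring, ?_⟩
    intro _
    obtain ⟨a0, ha0, hg0⟩ := exists_eps m π
    have hneπ : {j | j ≤ m ∧ g π j = eps m π}.Nonempty := ⟨a0, ha0, hg0⟩
    have hsmem : goodPos m π ∈ {j | j ≤ m ∧ g π j = eps m π} := Nat.sInf_mem hneπ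
    obtain ⟨hsm, hgs⟩ := hsmem
    have hsi : goodPos m π < i := hattlt _ hsm hgs
    have hsρ : goodPos m π ∈ {j | j ≤ m ∧ g ρ j = eps m ρ} :=
      ⟨hsm, by rw [grel_lt _ hsi, hgs, heps]⟩
    apply le_antisymm (Nat.sInf_le hsρ)
    show goodPos m π ≤ goodPos m ρ
    by_contra hlt2
    push_neg at hlt2
    have htmem : goodPos m ρ ∈ {j | j ≤ m ∧ g ρ j = eps m ρ} :=
      Nat.sInf_mem (Set.nonempty_of_mem hsρ)
    obtain ⟨htm, hgt⟩ := htmem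
    by_cases hit : i ≤ goodPos m ρ
    · omega
    · rw [grel_lt _ (by omega), heps] at hgt
      have hmem2 : goodPos m ρ ∈ {j | j ≤ m ∧ g π j = eps m π} := ⟨htm, hgt⟩
      have : goodPos m π ≤ goodPos m ρ := Nat.sInf_le hmem2
      omega
  · intro hc
    obtain ⟨a, hia, ham, hga⟩ : ∃ a, i ≤ a ∧ a ≤ m ∧ g π a = eps m π := by
      rcases hc with h0 | hlt
      · refine ⟨m, him, le_rfl, ?_⟩
        rw [phi_eq] at h0; omega
      · have hS : cogoodPos m π = sSup {j | 1 ≤ j ∧ j ≤ m + 1 ∧ h m π j = phi m π} := rfl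
        have hne : {j | 1 ≤ j ∧ j ≤ m + 1 ∧ h m π j = phi m π}.Nonempty := by
          by_contra hemp
          rw [Set.not_nonempty_iff_eq_empty] at hemp
          rw [hS, hemp, csSup_empty] at hlt
          exact absurd hlt (by simp)
        have hmem : cogoodPos m π ∈ {j | 1 ≤ j ∧ j ≤ m + 1 ∧ h m π j = phi m π} :=
          Nat.sSup_mem hne ⟨m + 1, fun x hx => hx.2.1⟩
        obtain ⟨h1, h2, h3⟩ := hmem
        refine ⟨cogoodPos m π - 1, by omega, by omega, ?_⟩
        rw [h_eq_g π h1 h2, phi_eq] at h3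
        omega
    have heps : eps m ρ = eps m π + 1 := by
      apply le_antisymm
      · apply eps_le (by have := eps_nonneg m π; omega)
        intro j hj
        by_cases hij : i ≤ j
        · rw [grel_ge j hij]; have := g_le_eps (m := m) π hj; omega
        · rw [grel_lt j (by omega)]; have := g_le_eps (m := m) π hj; omega
      · have hga' : g ρ a = eps m π + 1 := by rw [grel_ge a hia, hga]
        exact hga' ▸ g_le_eps ρ ham
    exact ⟨heps, by rw [phi_eq, phi_eq, heps, grel_ge m him]; ring⟩
  · intro hepspos hlt
    obtain ⟨a0, ha0, hg0⟩ := exists_eps m π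
    have hneπ : {j | j ≤ m ∧ g π j = eps m π}.Nonempty := ⟨a0, ha0, hg0⟩
    have hsmem : goodPos m π ∈ {j | j ≤ m ∧ g π j = eps m π} := Nat.sInf_mem hneπ
    obtain ⟨hsm, hgs⟩ := hsmem
    have heps : eps m ρ = eps m π + 1 := by
      apply le_antisymm
      · apply eps_le (by have := eps_nonneg m π; omega)
        intro j hj
        by_cases hij : i ≤ j
        · rw [grel_ge j hij]; have := g_le_eps (m := m) π hj; omega
        · rw [grel_lt j (by omega)]; have := g_le_eps (m := m) π hj; omega
      · have hga' : g ρ (goodPos m π) = eps m π + 1 := by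
          rw [grel_ge _ (by omega), hgs]
        exact hga' ▸ g_le_eps ρ hsm
    have hsρ : goodPos m π ∈ {j | j ≤ m ∧ g ρ j = eps m ρ} :=
      ⟨hsm, by rw [grel_ge _ (by omega), hgs, heps]⟩
    apply le_antisymm (Nat.sInf_le hsρ)
    show goodPos m π ≤ goodPos m ρ
    by_contra hlt2
    push_neg at hlt2
    have htmem : goodPos m ρ ∈ {j | j ≤ m ∧ g ρ j = eps m ρ} :=
      Nat.sInf_mem (Set.nonempty_of_mem hsρ)
    obtain ⟨htm, hgt⟩ := htmem
    by_cases hit : i ≤ goodPos m ρ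
    · rw [grel_ge _ hit, heps] at hgt
      have hmem2 : goodPos m ρ ∈ {j | j ≤ m ∧ g π j = eps m π} := ⟨htm, by omega⟩
      have : goodPos m π ≤ goodPos m ρ := Nat.sInf_le hmem2
      omega
    · rw [grel_lt _ (by omega), heps] at hgt
      have := g_le_eps (m := m) π htm
      omega

end PMSeq
end

section
/- Suppose S is a biorder, h ∈ {i, j}, and a, b are configurations for S with f̃_h a = b. Then a is a good configuration if and only if b is a good configuration. -/
/-!  Biorders and configurations (Section 4 of the paper).

A biorder is a finite set `S` with two linear orders `>_i`, `>_j` and a labelling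
`Γ : S → {i, j}` (here modelled by `Bool`, with `true` standing for the label `i` and
`false` for the label `j`), such that `s >_i t` and `t >_j s` force `Γ s = j` and `Γ t = i`.

A configuration is a function `a : S → ℕ` taking values in `{0, 1, 2}`.

All signature-related notions are defined relative to a finite subset `T ⊆ S`
(the biorder restricted to `T`); the notions for the biorder `S` itself are recovered
by taking `T = Finset.univ`. -/

attribute [local instance] Classical.propDecidable

namespace BiorderCrystal

structure Biorder (S : Type) where
  /-- the linear order whose strict relation is `<_i` -/
  li : LinearOrder S
  /-- the linear order whose strict relation is `<_j` -/
  lj : LinearOrder S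
  /-- the labelling `Γ : S → {i, j}`; `true` means label `i`, `false` means label `j` -/
  lab : S → Bool
  /-- if `s >_i t` and `t >_j s` then `Γ s = j` and `Γ t = i` -/
  compat : ∀ s t : S, li.lt t s → lj.lt s t → lab s = false ∧ lab t = true

variable {S : Type}

/-- `s <_i t`. -/
def Biorder.lti (B : Biorder S) (s t : S) : Prop := B.li.lt s t

/-- `s <_j t`. -/
def Biorder.ltj (B : Biorder S) (s t : S) : Prop := B.lj.lt s t

/-- The order used for the `h`-signature: `>_i` if `h = true`, `>_j` if `h = false`. -/
def Biorder.ord (B : Biorder S) (h : Bool) : LinearOrder S := if h then B.li else B.lj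

/-- `s ≫ t`, i.e. `s >_i t` and `s >_j t`. -/
def Biorder.gg (B : Biorder S) (s t : S) : Prop := B.lti t s ∧ B.ltj t s

/-- `s ⋗ t`, i.e. `s >_i t` or `s >_j t`. -/
def Biorder.gd (B : Biorder S) (s t : S) : Prop := B.lti t s ∨ B.ltj t s

/-- `▷`, the transitive closure of `⋗`, computed within the subset `T`. -/
def Biorder.triOn (B : Biorder S) (T : Finset S) : S → S → Prop :=
  Relation.TransGen (fun s t => s ∈ T ∧ t ∈ T ∧ B.gd s t)

/-- The sign `π_h(a, s) ∈ {+1, 0, -1}` contributed by `s` to the `h`-signature of `a`. -/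
def sgn (B : Biorder S) (h : Bool) (a : S → ℕ) (s : S) : ℤ :=
  if (a s = 0 ∧ B.lab s = h) ∨ (a s = 1 ∧ B.lab s ≠ h) then 1
  else if (a s = 1 ∧ B.lab s = h) ∨ (a s = 2 ∧ B.lab s ≠ h) then -1
  else 0

variable [Fintype S]

/-- Minus the partial sum of the `h`-signature of `a` (over `T`) along the positions
up to and including that of `s`: the elements of `T` which are `≥ s` in the order `ord h`. -/
noncomputable def G (B : Biorder S) (h : Bool) (T : Finset S) (a : S → ℕ) (s : S) : ℤ :=
  -(∑ t ∈ T.filter (fun t => (B.ord h).le s t), sgn B h a t)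

/-- The sum of the `h`-signature of `a` (over `T`) from the position of `s` onwards:
the elements of `T` which are `≤ s` in the order `ord h`. -/
noncomputable def H (B : Biorder S) (h : Bool) (T : Finset S) (a : S → ℕ) (s : S) : ℤ :=
  ∑ t ∈ T.filter (fun t => (B.ord h).le t s), sgn B h a t

/-- `ε_h(a)` (over `T`): the maximum of `0` and all the partial sums `G`. -/
noncomputable def epsB (B : Biorder S) (h : Bool) (T : Finset S) (a : S → ℕ) : ℤ :=
  T.fold max 0 (G B h T a)

/-- `φ_h(a)` (over `T`): the maximum of `0` and all the partial sums `H`. -/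
noncomputable def phiB (B : Biorder S) (h : Bool) (T : Finset S) (a : S → ℕ) : ℤ :=
  T.fold max 0 (H B h T a)

/-- The `h`-good element of `T` for `a`:  the element in the good position of the
`h`-signature, i.e. the `ord h`-greatest element achieving `G = ε_h > 0` (or `none`). -/
noncomputable def goodElt (B : Biorder S) (h : Bool) (T : Finset S) (a : S → ℕ) : Option S :=
  if hne : (T.filter fun s => 0 < epsB B h T a ∧ G B h T a s = epsB B h T a).Nonempty
  then some (@Finset.max' S (B.ord h) _ hne)
  else none

/-- The `h`-cogood element of `T` for `a`: the element in the cogood position of the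
`h`-signature, i.e. the `ord h`-least element achieving `H = φ_h > 0` (or `none`). -/
noncomputable def cogoodElt (B : Biorder S) (h : Bool) (T : Finset S) (a : S → ℕ) : Option S :=
  if hne : (T.filter fun s => 0 < phiB B h T a ∧ H B h T a s = phiB B h T a).Nonempty
  then some (@Finset.min' S (B.ord h) _ hne)
  else none

/-- The crystal operator `ẽ_h` (over `T`): decrease `a` by one at the `h`-good element,
or `none` (the ghost element `0`) if there is no good position. -/
noncomputable def et (B : Biorder S) (h : Bool) (T : Finset S) (a : S → ℕ) :
    Option (S → ℕ) :=
  (goodElt B h T a).map fun s => Function.update a s (a s - 1)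

/-- The crystal operator `f̃_h` (over `T`): increase `a` by one at the `h`-cogood element,
or `none` (the ghost element `0`) if there is no cogood position. -/
noncomputable def ft (B : Biorder S) (h : Bool) (T : Finset S) (a : S → ℕ) :
    Option (S → ℕ) :=
  (cogoodElt B h T a).map fun s => Function.update a s (a s + 1)

/-- `a` is a good configuration for the biorder restricted to `T`:
axioms G1, G2, G3 of the paper. -/
def IsGoodOn (B : Biorder S) (T : Finset S) (a : S → ℕ) : Prop :=
  (¬ ∃ s ∈ T, ∃ t ∈ T, B.lti t s ∧ B.ltj s t ∧ a s = 1 ∧ a t = 1) ∧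
  (¬ ∃ s ∈ T, ∃ t ∈ T, B.gd s t ∧ B.triOn T t s ∧ B.lab s = B.lab t ∧ a s < a t) ∧
  (¬ ∃ q ∈ T, ∃ r ∈ T, ∃ s ∈ T, ∃ t ∈ T,
      B.gd q r ∧ B.gg r s ∧ B.gd s t ∧ B.gg r t ∧ B.gd t q ∧ B.gg q s ∧
      a q = 2 ∧ a s = 2 ∧ a r = 0 ∧ a t = 0)

end BiorderCrystal

/-!
Write `b = a + δ_u` with `u` the cogood element; exchanging `i` and `j` we may take `h = i`. In
the `i`-signature of `a`, `u` carries a `+`, every `+` above `u` is separated from it by a `−`,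
and every `−` below `u` by a `+`. A violation of G1–G3 by `b` must involve `u`; in each case the
separating `−`, together with the biorder condition, produces a violation by `a`. The delicate
case is G2 with `t = u`: there one takes an `>_i`-minimal counterexample `s` and the step at which
a `⋗`-path from `u` to `s` crosses the `>_i`-level of `s` (or of `u`). For the converse, reversing
both orders, exchanging the labels and replacing `c` by `2 - c` preserves goodness and turns the
passage from `b` to `a` into a passage of the same kind, from `2 - b` to `2 - a`.
-/

open Finset Relation Function

theorem Relation.TransGen.exists_crossing {α : Type*} {r : α → α → Prop} {p : α → Prop}
    {x z : α} (h : TransGen r x z) (hx : p x) (hz : ¬ p z) :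
    ∃ v w, ReflTransGen r x v ∧ p v ∧ r v w ∧ ¬ p w ∧ ReflTransGen r w z := by
  induction h with
  | single hxz => exact ⟨x, _, .refl, hx, hxz, hz, .refl⟩
  | @tail y z hxy hyz ih =>
    by_cases hy : p y
    · exact ⟨y, z, hxy.to_reflTransGen, hy, hyz, hz, .refl⟩
    · obtain ⟨v, w, hxv, hv, hvw, hw, hwy⟩ := ih hy
      exact ⟨v, w, hxv, hv, hvw, hw, hwy.tail hyz⟩

section PrefixSum

variable {α : Type*} [LinearOrder α] [Fintype α] {σ : α → ℤ} {u y : α}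

noncomputable def prefixSum (σ : α → ℤ) (y : α) : ℤ := ∑ v ∈ univ.filter (· ≤ y), σ v

theorem prefixSum_eq_sum_filter_lt_add (σ : α → ℤ) (y : α) :
    prefixSum σ y = ∑ v ∈ univ.filter (· < y), σ v + σ y := by
  rw [prefixSum, ← sum_erase_add _ _ (by simp : y ∈ univ.filter (· ≤ y))]
  congr 2
  ext v
  simp [lt_iff_le_and_ne, and_comm]

theorem prefixSum_eq_add_sum_sdiff (σ : α → ℤ) {x y : α} (hxy : x ≤ y) :
    prefixSum σ y = ∑ v ∈ univ.filter (· ≤ y) \ univ.filter (· ≤ x), σ v + prefixSum σ x := by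
  refine (sum_sdiff fun v => ?_).symm
  simpa using fun h => h.trans hxy

theorem sum_filter_lt_lt_prefixSum (hpos : 0 < prefixSum σ u)
    (hfirst : ∀ t < u, prefixSum σ t < prefixSum σ u) (hyu : y ≤ u) :
    ∑ v ∈ univ.filter (· < y), σ v < prefixSum σ u := by
  rcases (univ.filter (· < y)).eq_empty_or_nonempty with h | hne
  · rwa [h, sum_empty]
  · have hty : (univ.filter (· < y)).max' hne < y := (mem_filter.mp (max'_mem _ hne)).2
    have heq : univ.filter (· < y) = univ.filter (· ≤ (univ.filter (· < y)).max' hne) := by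
      ext v
      simpa using ⟨fun h => le_max' _ v (by simpa using h), fun h => h.trans_lt hty⟩
    rw [heq]
    exact hfirst _ (hty.trans_le hyu)

theorem eq_one_of_prefixSum_lt (hσ : ∀ v, σ v ≤ 1) (hpos : 0 < prefixSum σ u)
    (hfirst : ∀ t < u, prefixSum σ t < prefixSum σ u) : σ u = 1 := by
  have := prefixSum_eq_sum_filter_lt_add σ u
  have := sum_filter_lt_lt_prefixSum hpos hfirst le_rfl
  have := hσ u
  omega

theorem exists_neg_between_of_prefixSum_le (hσ : ∀ v, -1 ≤ σ v)
    (hmax : ∀ t, prefixSum σ t ≤ prefixSum σ u) (huy : u < y) (hy : σ y = 1) :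
    ∃ w, u < w ∧ w < y ∧ σ w = -1 := by
  by_contra! hne
  have hnonneg : ∀ v ∈ univ.filter (· ≤ y) \ univ.filter (· ≤ u), 0 ≤ σ v := by
    intro v hv
    simp only [mem_sdiff, mem_filter, mem_univ, true_and, not_le] at hv
    rcases hv.1.lt_or_eq with hvy | rfl
    · have := hne v hv.2 hvy
      have := hσ v
      omega
    · omega
  have := single_le_sum hnonneg (by simp [huy] : y ∈ univ.filter (· ≤ y) \ univ.filter (· ≤ u))
  have := prefixSum_eq_add_sum_sdiff σ huy.le
  have := hmax y
  omega

theorem exists_pos_between_of_prefixSum_lt (hσ : ∀ v, σ v ≤ 1) (hpos : 0 < prefixSum σ u)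
    (hfirst : ∀ t < u, prefixSum σ t < prefixSum σ u) (hyu : y < u) (hy : σ y = -1) :
    ∃ w, y < w ∧ w < u ∧ σ w = 1 := by
  by_contra! hne
  have hu_mem : u ∈ univ.filter (· ≤ u) \ univ.filter (· ≤ y) := by simp [hyu]
  have hnonpos : ∀ v ∈ (univ.filter (· ≤ u) \ univ.filter (· ≤ y)).erase u, σ v ≤ 0 := by
    intro v hv
    simp only [mem_erase, mem_sdiff, mem_filter, mem_univ, true_and, not_le] at hv
    have := hne v hv.2.2 (hv.2.1.lt_of_ne hv.1)
    have := hσ v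
    omega
  -- `prefixSum σ u ≤ prefixSum σ y + σ u ≤ ∑_{v < y} σ v`
  have := sum_nonpos hnonpos
  have := sum_erase_add _ σ hu_mem
  have := prefixSum_eq_add_sum_sdiff σ hyu.le
  have := prefixSum_eq_sum_filter_lt_add σ y
  have := sum_filter_lt_lt_prefixSum hpos hfirst hyu.le
  have := hσ u
  omega

end PrefixSum

namespace BiorderCrystal

variable {S : Type}

namespace Biorder

variable (B : Biorder S)

instance : IsStrictTotalOrder S B.lti :=
  letI := B.li; inferInstanceAs (IsStrictTotalOrder S (· < ·))

instance : IsStrictTotalOrder S B.ltj :=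
  letI := B.lj; inferInstanceAs (IsStrictTotalOrder S (· < ·))

variable {B} {s t u : S}

theorem ltj_of_lti (hts : B.lti t s) (hl : B.lab s = true ∨ B.lab t = false) : B.ltj t s := by
  rcases trichotomous_of B.ltj t s with h | rfl | h
  · exact h
  · exact absurd hts (irrefl t)
  · have := B.compat s t hts h
    simp_all

theorem lti_of_ltj (hts : B.ltj t s) (hl : B.lab s = false ∨ B.lab t = true) : B.lti t s := by
  rcases trichotomous_of B.lti t s with h | rfl | h
  · exact h
  · exact absurd hts (irrefl t)
  · have := B.compat t s h hts
    simp_all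

theorem ne_of_gd (h : B.gd s t) : s ≠ t := by
  rintro rfl
  exact h.elim (irrefl s) (irrefl s)

theorem gg.gd (h : B.gg s t) : B.gd s t := Or.inl h.1

theorem lti_of_gd (h : B.gd s t) (hl : B.lab s = false ∨ B.lab t = true) : B.lti t s :=
  h.elim id (lti_of_ltj · hl)

theorem gg_of_gd_of_lab_eq (h : B.gd s t) (hl : B.lab s = B.lab t) : B.gg s t := by
  have hi : B.lti t s := lti_of_gd h (by cases hs : B.lab s <;> simp_all)
  exact ⟨hi, ltj_of_lti hi (by cases hs : B.lab s <;> simp_all)⟩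

theorem ltj_and_lab_of_gd_of_lti (h : B.gd s t) (hst : B.lti s t) :
    B.ltj t s ∧ B.lab t = false ∧ B.lab s = true :=
  have hts := h.resolve_left (asymm hst)
  ⟨hts, B.compat t s hst hts⟩

theorem gg_of_not_gd (hne : s ≠ t) (h : ¬ B.gd s t) : B.gg t s := by
  simp only [gd, not_or] at h
  exact ⟨(trichotomous_of B.lti s t).resolve_right (by simp [hne, h.1]),
    (trichotomous_of B.ltj s t).resolve_right (by simp [hne, h.2])⟩

theorem gg_trans (h₁ : B.gg s t) (h₂ : B.gg t u) : B.gg s u :=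
  ⟨_root_.trans h₂.1 h₁.1, _root_.trans h₂.2 h₁.2⟩

theorem not_gd_of_gg (h : B.gg s t) : ¬ B.gd t s := by
  rintro (h' | h')
  · exact asymm h.1 h'
  · exact asymm h.2 h'

theorem triOn_univ [Fintype S] : B.triOn univ = TransGen B.gd := by
  simp [triOn]

end Biorder

section Good

variable {B : Biorder S} {a : S → ℕ} {q r s t x y : S}

structure G3Shape (B : Biorder S) (q r s t : S) : Prop where
  qr : B.gd q r
  rs : B.gg r s
  st : B.gd s t
  rt : B.gg r t
  tq : B.gd t q
  qs : B.gg q s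

structure IsGood (B : Biorder S) (a : S → ℕ) : Prop where
  g1 : ∀ ⦃s t⦄, B.lti t s → B.ltj s t → a s = 1 → a t ≠ 1
  g2 : ∀ ⦃s t⦄, B.gd s t → TransGen B.gd t s → B.lab s = B.lab t → a t ≤ a s
  g3 : ∀ ⦃q r s t⦄, G3Shape B q r s t → a q = 2 → a s = 2 → a r = 0 → a t ≠ 0

theorem isGoodOn_univ_iff [Fintype S] : IsGoodOn B univ a ↔ IsGood B a := by
  simp only [IsGoodOn, Biorder.triOn_univ, mem_univ, true_and, not_exists, not_and, not_lt]
  refine ⟨fun ⟨h1, h2, h3⟩ => ⟨h1, h2, fun q r s t h => h3 q r s t h.1 h.2 h.3 h.4 h.5 h.6⟩,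
    fun ⟨h1, h2, h3⟩ => ⟨h1, h2, fun q r s t h₁ h₂ h₃ h₄ h₅ h₆ => h3 ⟨h₁, h₂, h₃, h₄, h₅, h₆⟩⟩⟩

theorem G3Shape.transGen (h : G3Shape B q r s t) (hx : x = q ∨ x = r ∨ x = s ∨ x = t)
    (hy : y = q ∨ y = r ∨ y = s ∨ y = t) : TransGen B.gd x y := by
  have hq : ∀ z, z = q ∨ z = r ∨ z = s ∨ z = t → TransGen B.gd z q ∧ TransGen B.gd q z := by
    have qr := TransGen.single h.qr
    have rs := TransGen.single h.rs.gd
    have st := TransGen.single h.st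
    have tq := TransGen.single h.tq
    rintro z (rfl | rfl | rfl | rfl)
    · exact ⟨qr.trans (rs.trans (st.trans tq)), qr.trans (rs.trans (st.trans tq))⟩
    · exact ⟨rs.trans (st.trans tq), qr⟩
    · exact ⟨st.trans tq, qr.trans rs⟩
    · exact ⟨tq, qr.trans (rs.trans st)⟩
  exact (hq x hx).1.trans (hq y hy).2

theorem G3Shape.gd_or_gd (h : G3Shape B q r s t) : B.gd r q ∨ B.gd t s := by
  by_contra! hn
  have hqr := Biorder.gg_of_not_gd (Biorder.ne_of_gd h.qr).symm hn.1
  have hst := Biorder.gg_of_not_gd (Biorder.ne_of_gd h.st).symm hn.2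
  exact Biorder.not_gd_of_gg (Biorder.gg_trans hqr (Biorder.gg_trans h.rs hst)) h.tq

theorem IsGood.le_of_g3Shape (hg : IsGood B a) (h : G3Shape B q r s t)
    (hx : x = q ∨ x = r ∨ x = s ∨ x = t) (hy : y = q ∨ y = r ∨ y = s ∨ y = t)
    (hxy : B.gd x y) (hl : B.lab x = B.lab y) : a y ≤ a x :=
  hg.g2 hxy (h.transGen hy hx) hl

end Good

namespace Biorder

variable {B : Biorder S} {h : Bool} {a : S → ℕ} {s t : S}

theorem sgn_mem_Icc : sgn B h a s ∈ Set.Icc (-1) 1 := by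
  unfold sgn
  split_ifs <;> simp

theorem sgn_true_eq_one_iff :
    sgn B true a s = 1 ↔ a s = 0 ∧ B.lab s = true ∨ a s = 1 ∧ B.lab s = false := by
  cases hl : B.lab s <;> rcases ha : a s with _ | _ | _ | n <;> simp [sgn, hl, ha]

theorem sgn_true_eq_neg_one_iff :
    sgn B true a s = -1 ↔ a s = 1 ∧ B.lab s = true ∨ a s = 2 ∧ B.lab s = false := by
  cases hl : B.lab s <;> rcases ha : a s with _ | _ | _ | n <;> simp [sgn, hl, ha]

variable (B) in
def swap : Biorder S where
  li := B.lj
  lj := B.li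
  lab s := !B.lab s
  compat s t h₁ h₂ := by simpa using (B.compat t s h₂ h₁).symm

variable (B) in
def orient (h : Bool) : Biorder S := bif h then B else B.swap

theorem orient_lti : (B.orient h).lti s t ↔ (B.ord h).lt s t := by
  cases h <;> rfl

theorem sgn_orient : sgn (B.orient h) true a = sgn B h a := by
  cases h
  · funext s
    simp [sgn, orient, swap]
  · rfl

theorem swap_gd : B.swap.gd = B.gd :=
  funext₂ fun _ _ => propext or_comm

theorem isGood_swap_iff : IsGood B.swap a ↔ IsGood B a := by
  have hshape : ∀ {q r s t}, G3Shape B.swap q r s t ↔ G3Shape B q r s t := fun {q r s t} =>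
    ⟨fun h => ⟨h.qr.symm, h.rs.symm, h.st.symm, h.rt.symm, h.tq.symm, h.qs.symm⟩,
      fun h => ⟨h.qr.symm, h.rs.symm, h.st.symm, h.rt.symm, h.tq.symm, h.qs.symm⟩⟩
  have hlab : ∀ s t, B.swap.lab s = B.swap.lab t ↔ B.lab s = B.lab t := by
    simp [swap]
  constructor <;> rintro ⟨h1, h2, h3⟩
  · refine ⟨fun s t hts hst has hat => h1 hst hts hat has, fun s t hst hts hl => ?_,
      fun q r s t h => h3 (hshape.mpr h)⟩
    rw [← swap_gd] at hst hts
    exact h2 hst hts ((hlab s t).mpr hl)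
  · refine ⟨fun s t hts hst has hat => h1 hst hts hat has, fun s t hst hts hl => ?_,
      fun q r s t h => h3 (hshape.mp h)⟩
    rw [swap_gd] at hst hts
    exact h2 hst hts ((hlab s t).mp hl)

theorem isGood_orient_iff : IsGood (B.orient h) a ↔ IsGood B a := by
  cases h
  · exact isGood_swap_iff
  · rfl

variable (B) in
def dual : Biorder S where
  li := letI := B.li; inferInstanceAs (LinearOrder Sᵒᵈ)
  lj := letI := B.lj; inferInstanceAs (LinearOrder Sᵒᵈ)
  lab s := !B.lab s
  compat s t h₁ h₂ := by simpa using (B.compat t s h₁ h₂).symm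

theorem sgn_dual (hs : a s ≤ 2) : sgn B.dual h (fun x => 2 - a x) s = -sgn B h a s := by
  cases hl : B.lab s <;> cases h <;> rcases ha : a s with _ | _ | _ | n <;>
    simp_all [sgn, dual]

theorem isGood_dual_iff (ha : ∀ s, a s ≤ 2) :
    IsGood B.dual (fun s => 2 - a s) ↔ IsGood B a := by
  have hlab : ∀ s t, B.dual.lab s = B.dual.lab t ↔ B.lab s = B.lab t := by
    simp [dual]
  constructor <;> rintro ⟨h1, h2, h3⟩
  · refine ⟨fun s t hts hst has hat => ?_, fun s t hst hts hl => ?_, fun q r s t h hq hs hr ht => ?_⟩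
    · exact h1 (s := t) (t := s) hts hst (by omega) (by omega)
    · have := h2 (s := t) (t := s) hst hts.swap ((hlab t s).mpr hl.symm)
      have := ha s
      have := ha t
      omega
    · exact h3 ⟨h.st, h.rs, h.qr, h.qs, h.tq, h.rt⟩ (by omega) (by omega) (by omega) (by omega)
  · refine ⟨fun s t hts hst has hat => ?_, fun s t hst hts hl => ?_, fun q r s t h hq hs hr ht => ?_⟩
    · exact h1 (s := t) (t := s) hts hst (by omega) (by omega)
    · have := h2 (s := t) (t := s) hst hts.swap ((hlab t s).mp hl.symm)
      have := ha s
      have := ha t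
      omega
    · have := ha r
      have := ha t
      exact h3 ⟨h.st, h.rs, h.qr, h.qs, h.tq, h.rt⟩ (by omega) (by omega) (by omega) (by omega)

end Biorder

section Update

open Biorder

variable {B : Biorder S} {a : S → ℕ} {q r s t u : S}

theorem IsGood.g3_of_one_at_q (hg : IsGood B a) (h : G3Shape B q r s t) (hq : a q = 1)
    (hlq : B.lab q = false) (hs : a s = 2) (hr : a r = 0) : a t ≠ 0 := by
  intro ht
  have hls : B.lab s = true :=
    (B.lab s).eq_false_or_eq_true.resolve_right fun hls => by
      have := hg.le_of_g3Shape h (by simp) (by simp) h.qs.gd (hlq.trans hls.symm)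
      omega
  have hlr : B.lab r = false :=
    (B.lab r).eq_false_or_eq_true.resolve_left fun hlr => by
      have := hg.le_of_g3Shape h (by simp) (by simp) h.rs.gd (hlr.trans hls.symm)
      omega
  have hlt : B.lab t = true :=
    (B.lab t).eq_false_or_eq_true.resolve_right fun hlt => by
      have := hg.le_of_g3Shape h (by simp) (by simp) h.tq (hlt.trans hlq.symm)
      omega
  rcases h.gd_or_gd with hrq | hts
  · have := hg.le_of_g3Shape h (by simp) (by simp) hrq (hlr.trans hlq.symm)
    omega
  · have := hg.le_of_g3Shape h (by simp) (by simp) hts (hlt.trans hls.symm)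
    omega

structure SeparatedPlus (B : Biorder S) (a : S → ℕ) (u : S) : Prop where
  sgn_eq_one : sgn B true a u = 1
  exists_minus_between : ∀ ⦃y⦄, B.lti u y → sgn B true a y = 1 →
    ∃ w, B.lti u w ∧ B.lti w y ∧ sgn B true a w = -1

namespace SeparatedPlus

theorem value_lab (hu : SeparatedPlus B a u) :
    a u = 0 ∧ B.lab u = true ∨ a u = 1 ∧ B.lab u = false :=
  sgn_true_eq_one_iff.mp hu.sgn_eq_one

theorem exists_between {y : S} (hu : SeparatedPlus B a u) (huy : B.lti u y)
    (hy : a y = 0 ∧ B.lab y = true ∨ a y = 1 ∧ B.lab y = false) :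
    ∃ w, B.lti u w ∧ B.lti w y ∧ (a w = 1 ∧ B.lab w = true ∨ a w = 2 ∧ B.lab w = false) := by
  obtain ⟨w, huw, hwy, hw⟩ := hu.exists_minus_between huy (sgn_true_eq_one_iff.mpr hy)
  exact ⟨w, huw, hwy, sgn_true_eq_neg_one_iff.mp hw⟩

theorem exists_lti_of_lab_true (ha : ∀ s, a s ≤ 2) (hg : IsGood B a) (hu : SeparatedPlus B a u)
    (hu0 : a u = 0) (hlu : B.lab u = true) (hsu : B.gd s u) (hus : TransGen B.gd u s)
    (hl : B.lab s = B.lab u) (has : a s = a u) :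
    ∃ x, B.lti x s ∧ B.gd x u ∧ TransGen B.gd u x ∧ B.lab x = B.lab u ∧ a x = a u := by
  by_contra! hmin
  have hls : B.lab s = true := hl.trans hlu
  have has0 : a s = 0 := has.trans hu0
  have hsu' : B.gg s u := gg_of_gd_of_lab_eq hsu hl
  have hzero : ∀ v, B.lti u v → B.lti v s → B.lab v = true → a v = 0 := fun v huv hvs hlv =>
    Nat.le_zero.mp (has0 ▸ hg.g2 (Or.inl hvs) (.head (Or.inl huv) hus) (hls.trans hlv.symm))
  obtain ⟨w, huw, hws, hw⟩ := hu.exists_between hsu'.1 (Or.inl ⟨has0, hls⟩)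
  obtain ⟨haw, hlw⟩ : a w = 2 ∧ B.lab w = false :=
    hw.resolve_left fun ⟨h, hl⟩ => by simp [hzero w huw hws hl] at h
  obtain ⟨x, y, hux, hxs, hxy, hys, hyz⟩ :=
    hus.exists_crossing (p := (B.lti · s)) hsu'.1 (irrefl s)
  have hxy_i : B.lti x y := trans_trichotomous_right hxs hys
  obtain ⟨hyx_j, hly, hlx⟩ := ltj_and_lab_of_gd_of_lti hxy hxy_i
  have hsy : B.lti s y := by
    rcases trichotomous_of B.lti s y with h | rfl | h
    · exact h
    · simp [hls] at hly
    · exact absurd h hys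
  have hys' : TransGen B.gd y s :=
    (reflTransGen_iff_eq_or_transGen.mp hyz).resolve_left (ne_of_irrefl hsy)
  have hay : a y = 2 := by
    have := hg.g2 (Or.inl (_root_.trans hws hsy)) (.head' (Or.inl huw) (hux.tail hxy))
      (hly.trans hlw.symm)
    have := ha y
    omega
  have hxw : B.lti x w ∧ a x = 0 := by
    rcases trichotomous_of B.lti u x with hux' | rfl | hxu
    · refine (hmin x hxs (Or.inl hux') ?_ (hlx.trans hlu.symm) ?_).elim
      · exact (reflTransGen_iff_eq_or_transGen.mp hux).resolve_left (ne_of_irrefl' hux')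
      · rw [hzero x hux' hxs hlx, hu0]
    · exact ⟨huw, hu0⟩
    · exact ⟨_root_.trans hxu huw, Nat.le_zero.mp
        (has0 ▸ hg.g2 (Or.inl hxs) (.head hxy hys') (hls.trans hlx.symm))⟩
  -- `y, s, w, x` form a G3 pattern for `a`
  exact hg.g3 ⟨Or.inl hsy, ⟨hws, ltj_of_lti hws (Or.inl hls)⟩, Or.inl hxw.1,
    ⟨hxs, ltj_of_lti hxs (Or.inl hls)⟩, Or.inr hyx_j,
    ⟨_root_.trans hws hsy, ltj_of_lti (_root_.trans hws hsy) (Or.inr hlw)⟩⟩ hay haw has0 hxw.2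

theorem exists_lti_of_lab_false (hg : IsGood B a) (hu : SeparatedPlus B a u)
    (hu1 : a u = 1) (hlu : B.lab u = false) (hsu : B.gd s u) (hus : TransGen B.gd u s)
    (hl : B.lab s = B.lab u) (has : a s = a u) :
    ∃ x, B.lti x s ∧ B.gd x u ∧ TransGen B.gd u x ∧ B.lab x = B.lab u ∧ a x = a u := by
  by_contra! hmin
  have hls : B.lab s = false := hl.trans hlu
  have has1 : a s = 1 := has.trans hu1
  have hsu' : B.gg s u := gg_of_gd_of_lab_eq hsu hl
  -- a `j`-labelled `v` strictly between `u` and `s` would satisfy `a v = 1` and contradict `hmin`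
  have hmid : ∀ v, B.lti u v → B.lti v s → B.lab v = true := by
    intro v huv hvs
    refine (B.lab v).eq_false_or_eq_true.resolve_right fun hlv => ?_
    have huv' : TransGen B.gd u v := hus.tail (Or.inl hvs)
    have h₁ := hg.g2 (Or.inl huv) huv' (hlv.trans hlu.symm)
    have h₂ := hg.g2 (Or.inl hvs) (.head (Or.inl huv) hus) (hls.trans hlv.symm)
    exact hmin v hvs (Or.inl huv) huv' (hlv.trans hlu.symm) (by omega)
  obtain ⟨w, huw, hws, hw⟩ := hu.exists_between hsu'.1 (Or.inr ⟨has1, hls⟩)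
  obtain ⟨haw, hlw⟩ : a w = 1 ∧ B.lab w = true :=
    hw.resolve_right fun ⟨_, hl⟩ => by simp [hmid w huw hws] at hl
  have hws_j : B.ltj w s := by
    rcases trichotomous_of B.ltj w s with h | rfl | h
    · exact h
    · exact absurd hws (irrefl w)
    · exact absurd haw (hg.g1 hws h has1)
  obtain ⟨x, y, -, hxu, hxy, huy, -⟩ :=
    hus.exists_crossing (p := fun v => ¬ B.lti u v) (irrefl u) (not_not.mpr hsu'.1)
  rw [not_not] at huy
  obtain ⟨hyx_j, hly, hlx⟩ := ltj_and_lab_of_gd_of_lti hxy (trans_trichotomous_left hxu huy)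
  have hxu' : B.lti x u := by
    rcases trichotomous_of B.lti x u with h | rfl | h
    · exact h
    · simp [hlu] at hlx
    · exact absurd h hxu
  -- the cycle `w <_j s ≤_j y <_j x <_j w`
  have hxw : B.ltj x w := ltj_of_lti (_root_.trans hxu' huw) (Or.inl hlw)
  have hys : ¬ B.ltj y s := fun h => by simp [hmid y huy (lti_of_ltj h (Or.inl hls))] at hly
  exact irrefl w (_root_.trans (trans_trichotomous_right hws_j hys) (_root_.trans hyx_j hxw))

theorem lt_of_gd_of_transGen [Finite S] (ha : ∀ s, a s ≤ 2) (hg : IsGood B a)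
    (hu : SeparatedPlus B a u) (hsu : B.gd s u) (hus : TransGen B.gd u s)
    (hl : B.lab s = B.lab u) : a u < a s := by
  refine (hg.g2 hsu hus hl).lt_of_ne fun heq => ?_
  obtain ⟨s₀, ⟨h₁, h₂, h₃, h₄⟩, hmin⟩ := (Finite.wellFounded_of_trans_of_irrefl B.lti).has_min
    {x | B.gd x u ∧ TransGen B.gd u x ∧ B.lab x = B.lab u ∧ a x = a u} ⟨s, hsu, hus, hl, heq.symm⟩
  obtain ⟨x, hxs, hx⟩ := hu.value_lab.elim
    (fun ⟨hu0, hlu⟩ => hu.exists_lti_of_lab_true ha hg hu0 hlu h₁ h₂ h₃ h₄)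
    (fun ⟨hu1, hlu⟩ => hu.exists_lti_of_lab_false hg hu1 hlu h₁ h₂ h₃ h₄)
  exact hmin x hx hxs

theorem g3_of_one_at_s (hg : IsGood B a) (hu : SeparatedPlus B a s) (h : G3Shape B q r s t)
    (hq : a q = 2) (hs : a s = 1) (hr : a r = 0) : a t ≠ 0 := by
  intro ht
  have hls : B.lab s = false := (hu.value_lab.resolve_left fun h => by omega).2
  have hlr : B.lab r = true :=
    (B.lab r).eq_false_or_eq_true.resolve_right fun hlr => by
      have := hg.le_of_g3Shape h (by simp) (by simp) h.rs.gd (hlr.trans hls.symm)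
      omega
  cases hlq : B.lab q
  · have hlt : B.lab t = true :=
      (B.lab t).eq_false_or_eq_true.resolve_right fun hlt => by
        have := hg.le_of_g3Shape h (by simp) (by simp) h.tq (hlt.trans hlq.symm)
        omega
    have hrq : B.lti r q := lti_of_gd h.qr (Or.inl hlq)
    have hts : B.lti t s := lti_of_gd h.st (Or.inl hls)
    obtain ⟨w, hsw, hwr, hw⟩ := hu.exists_between h.rs.1 (Or.inl ⟨hr, hlr⟩)
    obtain ⟨haw, hlw⟩ : a w = 2 ∧ B.lab w = false := hw.resolve_left fun ⟨haw, hlw⟩ => by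
      have := hg.g2 (Or.inl hwr) (.head (Or.inl hsw) (h.transGen (by simp) (by simp)))
        (hlr.trans hlw.symm)
      omega
    -- replacing `s` by `w` gives a G3 pattern for `a`
    exact hg.g3 ⟨h.qr, ⟨hwr, ltj_of_lti hwr (Or.inl hlr)⟩, Or.inl (_root_.trans hts hsw), h.rt,
      h.tq, ⟨_root_.trans hwr hrq, ltj_of_lti (_root_.trans hwr hrq) (Or.inr hlw)⟩⟩ hq haw hr ht
  · have hlt : B.lab t = false :=
      (B.lab t).eq_false_or_eq_true.resolve_left fun hlt => by
        have := hg.le_of_g3Shape h (by simp) (by simp) h.tq (hlt.trans hlq.symm)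
        omega
    rcases h.gd_or_gd with hrq | hts
    · have := hg.le_of_g3Shape h (by simp) (by simp) hrq (hlr.trans hlq.symm)
      omega
    · have := hg.le_of_g3Shape h (by simp) (by simp) hts (hlt.trans hls.symm)
      omega

theorem g1_update (hg : IsGood B a) (hu : SeparatedPlus B a u) (hts : B.lti t s)
    (hst : B.ltj s t) (hs : update a u (a u + 1) s = 1) : update a u (a u + 1) t ≠ 1 := by
  obtain ⟨hls, hlt⟩ := B.compat s t hts hst
  have hsu : s ≠ u := by
    rintro rfl
    rcases hu.value_lab with ⟨_, h⟩ | ⟨h, _⟩ <;> simp_all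
  rw [update_of_ne hsu] at hs
  rcases eq_or_ne t u with rfl | htu
  · intro ht
    obtain ⟨w, htw, hws, hw⟩ := hu.exists_between hts (Or.inr ⟨hs, hls⟩)
    rcases hw with ⟨haw, hlw⟩ | ⟨haw, hlw⟩
    · exact hg.g1 hws (_root_.trans hst (ltj_of_lti htw (Or.inl hlw))) hs haw
    · have := hg.g2 (Or.inl hws) (.head (Or.inl htw) (.single (Or.inr hst))) (hls.trans hlw.symm)
      omega
  · rw [update_of_ne htu]
    exact hg.g1 hts hst hs

theorem g2_update [Finite S] (ha : ∀ s, a s ≤ 2) (hg : IsGood B a) (hu : SeparatedPlus B a u)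
    (hst : B.gd s t) (hts : TransGen B.gd t s) (hl : B.lab s = B.lab t) :
    update a u (a u + 1) t ≤ update a u (a u + 1) s := by
  rcases eq_or_ne t u with rfl | htu
  · rw [update_of_ne (ne_of_gd hst), update_self]
    exact hu.lt_of_gd_of_transGen ha hg hst hts hl
  · rw [update_of_ne htu]
    exact (hg.g2 hst hts hl).trans (le_update_self_iff.mpr (Nat.le_succ _) s)

theorem g3_update (hg : IsGood B a) (hu : SeparatedPlus B a u) (h : G3Shape B q r s t)
    (hq : update a u (a u + 1) q = 2) (hs : update a u (a u + 1) s = 2)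
    (hr : update a u (a u + 1) r = 0) : update a u (a u + 1) t ≠ 0 := by
  have hne : ∀ x, update a u (a u + 1) x = 0 → x ≠ u := by
    rintro x hx rfl
    simp at hx
  rw [update_of_ne (hne r hr)] at hr
  intro ht
  rw [update_of_ne (hne t ht)] at ht
  rcases eq_or_ne q u with rfl | hqu
  · rw [update_self] at hq
    rw [update_of_ne (ne_of_gd h.qs.gd).symm] at hs
    exact hg.g3_of_one_at_q h (by omega) (hu.value_lab.resolve_left fun h => by omega).2 hs hr ht
  rw [update_of_ne hqu] at hq
  rcases eq_or_ne s u with rfl | hsu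
  · rw [update_self] at hs
    exact hu.g3_of_one_at_s hg h hq (by omega) hr ht
  · rw [update_of_ne hsu] at hs
    exact hg.g3 h hq hs hr ht

theorem isGood_update [Finite S] (ha : ∀ s, a s ≤ 2) (hg : IsGood B a)
    (hu : SeparatedPlus B a u) : IsGood B (update a u (a u + 1)) :=
  ⟨fun _ _ => hu.g1_update hg, fun _ _ => hu.g2_update ha hg, fun _ _ _ _ => hu.g3_update hg⟩

theorem isGood_of_isGood_update [Finite S] (ha : ∀ s, a s ≤ 2) (hu : SeparatedPlus B a u)
    (hbelow : ∀ ⦃y⦄, B.lti y u → sgn B true a y = -1 →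
      ∃ w, B.lti y w ∧ B.lti w u ∧ sgn B true a w = 1)
    (hg : IsGood B (update a u (a u + 1))) : IsGood B a := by
  generalize hb_def : update a u (a u + 1) = b at hg
  have hbu : b u = a u + 1 := hb_def ▸ update_self ..
  have hbo : ∀ s, s ≠ u → b s = a s := fun s hsu => hb_def ▸ update_of_ne hsu ..
  have hb : ∀ s, b s ≤ 2 := by
    intro s
    rcases eq_or_ne s u with rfl | hsu
    · rcases hu.value_lab with h | h <;> omega
    · exact hbo s hsu ▸ ha s
  have hsgn : ∀ s, s ≠ u → sgn B.dual true (fun x => 2 - b x) s = -sgn B true a s := by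
    intro s hsu
    rw [sgn_dual (hb s)]
    simp [sgn, hbo s hsu]
  have hdual : SeparatedPlus B.dual (fun x => 2 - b x) u := by
    refine ⟨?_, fun y huy hy => ?_⟩
    · rw [sgn_dual (hb u), neg_eq_iff_eq_neg, sgn_true_eq_neg_one_iff, hbu]
      rcases hu.value_lab with h | h <;> simp [h]
    · have hyu : y ≠ u := ne_of_irrefl' huy
      obtain ⟨w, hyw, hwu, hw⟩ := hbelow huy (by rw [hsgn y hyu] at hy; omega)
      exact ⟨w, hwu, hyw, by rw [hsgn w (ne_of_irrefl hwu), hw]⟩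
  have := hdual.isGood_update (fun _ => Nat.sub_le _ _) ((isGood_dual_iff hb).mpr hg)
  have heq : update (fun x => 2 - b x) u (2 - b u + 1) = fun x => 2 - a x := by
    funext x
    rcases eq_or_ne x u with rfl | hxu
    · rw [update_self, hbu]
      rcases hu.value_lab with h | h <;> omega
    · rw [update_of_ne hxu, hbo x hxu]
  rwa [heq, isGood_dual_iff ha] at this

end SeparatedPlus

end Update

theorem cogoodElt_spec [Fintype S] {B : Biorder S} {h : Bool} {a : S → ℕ} {u : S}
    (hu : cogoodElt B h univ a = some u) :
    SeparatedPlus (B.orient h) a u ∧ ∀ ⦃y⦄, (B.orient h).lti y u →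
      sgn (B.orient h) true a y = -1 →
        ∃ w, (B.orient h).lti y w ∧ (B.orient h).lti w u ∧ sgn (B.orient h) true a w = 1 := by
  let _ : LinearOrder S := B.ord h
  unfold cogoodElt at hu
  split_ifs at hu with hne
  obtain rfl := Option.some.inj hu
  obtain ⟨-, hpos, hHu⟩ := mem_filter.mp (min'_mem _ hne)
  have hmax : ∀ t, H B h univ a t ≤ H B h univ a (min' _ hne) := fun t => by
    rw [hHu]
    exact (le_fold_max _).mpr (Or.inr ⟨t, mem_univ t, le_rfl⟩)
  have hfirst : ∀ t < min' _ hne, H B h univ a t < H B h univ a (min' _ hne) := fun t ht =>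
    (hmax t).lt_of_ne fun heq =>
      (min'_le _ t (mem_filter.mpr ⟨mem_univ t, hpos, heq.trans hHu⟩)).not_gt ht
  rw [← hHu] at hpos
  refine ⟨⟨?_, fun y huy hy => ?_⟩, fun y hyu hy => ?_⟩ <;>
    simp only [Biorder.orient_lti, Biorder.sgn_orient] at *
  · exact eq_one_of_prefixSum_lt (fun v => Biorder.sgn_mem_Icc.2) hpos hfirst
  · exact exists_neg_between_of_prefixSum_le (fun v => Biorder.sgn_mem_Icc.1) hmax huy hy
  · exact exists_pos_between_of_prefixSum_lt (fun v => Biorder.sgn_mem_Icc.2) hpos hfirst hyu hy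

theorem good_preserved_by_crystal_operators_general (S : Type) [Fintype S] (B : Biorder S)
    (h : Bool) (a b : S → ℕ) (ha : ∀ s, a s ≤ 2)
    (hf : ft B h Finset.univ a = some b) :
    IsGoodOn B Finset.univ a ↔ IsGoodOn B Finset.univ b := by
  obtain ⟨u, hu, rfl⟩ := Option.map_eq_some_iff.mp hf
  obtain ⟨hplus, hbelow⟩ := cogoodElt_spec hu
  simp only [isGoodOn_univ_iff, ← Biorder.isGood_orient_iff (B := B) (h := h)]
  exact ⟨hplus.isGood_update ha, hplus.isGood_of_isGood_update ha hbelow⟩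

/-- Proposition 4.6 of the paper: if `f̃_h a = b`, then `a` is a good configuration
if and only if `b` is. -/
theorem good_preserved_by_crystal_operators (S : Type) [Fintype S] (B : Biorder S)
    (h : Bool) (a b : S → ℕ) (ha : ∀ s, a s ≤ 2) (hb : ∀ s, b s ≤ 2)
    (hf : ft B h Finset.univ a = some b) :
    IsGoodOn B Finset.univ a ↔ IsGoodOn B Finset.univ b :=
  good_preserved_by_crystal_operators_general S B h a b ha hf

end BiorderCrystal
end

section
/- Suppose S is a biorder and a is a good configuration for S with ẽ_i a ≠ 0, ẽ_j a ≠ 0 and ε_j(ẽ_i a) = ε_j(a). Then ẽ_i ẽ_j a = ẽ_j ẽ_i a ≠ 0, and ε_i(ẽ_j a) = ε_i(a) + 1. -/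
/-!  Biorders and configurations (Section 4 of the paper).

A biorder is a finite set `S` with two linear orders `>_i`, `>_j` and a labelling
`Γ : S → {i, j}` (here modelled by `Bool`, with `true` standing for the label `i` and
`false` for the label `j`), such that `s >_i t` and `t >_j s` force `Γ s = j` and `Γ t = i`.

A configuration is a function `a : S → ℕ` taking values in `{0, 1, 2}`.

All signature-related notions are defined relative to a finite subset `T ⊆ S`
(the biorder restricted to `T`); the notions for the biorder `S` itself are recovered
by taking `T = Finset.univ`. -/

attribute [local instance] Classical.propDecidable

namespace BiorderCrystal

variable {S : Type}

variable [Fintype S]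

/-! ### Auxiliary lemmas for the proof of Lemma 4.11 -/

section Aux

variable {S : Type}

-- Helpers for working with an explicit `LinearOrder` structure.
lemma lo_le_refl (L : LinearOrder S) (x : S) : L.le x x := by
  letI := L; exact le_refl x

lemma lo_le_of_lt (L : LinearOrder S) {x y : S} (h : L.lt x y) : L.le x y := by
  letI := L; exact le_of_lt h

lemma lo_lt_of_not_le (L : LinearOrder S) {x y : S} (h : ¬ L.le x y) : L.lt y x := by
  letI := L; exact not_le.mp h

lemma lo_not_le_of_lt (L : LinearOrder S) {x y : S} (h : L.lt x y) : ¬ L.le y x := by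
  letI := L; exact not_le.mpr h

lemma lo_trichot (L : LinearOrder S) (x y : S) : L.lt x y ∨ x = y ∨ L.lt y x := by
  letI := L; exact lt_trichotomy x y

lemma lo_lt_trans (L : LinearOrder S) {x y z : S} (h1 : L.lt x y) (h2 : L.lt y z) : L.lt x z := by
  letI := L; exact lt_trans h1 h2

lemma lo_lt_of_le_of_lt (L : LinearOrder S) {x y z : S} (h1 : L.le x y) (h2 : L.lt y z) :
    L.lt x z := by
  letI := L; exact lt_of_le_of_lt h1 h2

lemma lo_lt_of_lt_of_le (L : LinearOrder S) {x y z : S} (h1 : L.lt x y) (h2 : L.le y z) :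
    L.lt x z := by
  letI := L; exact lt_of_lt_of_le h1 h2

lemma lo_le_trans (L : LinearOrder S) {x y z : S} (h1 : L.le x y) (h2 : L.le y z) : L.le x z := by
  letI := L; exact le_trans h1 h2

lemma lo_lt_of_le_of_ne (L : LinearOrder S) {x y : S} (h1 : L.le x y) (h2 : x ≠ y) :
    L.lt x y := by
  letI := L; exact lt_of_le_of_ne h1 h2

lemma lo_ne_of_lt (L : LinearOrder S) {x y : S} (h : L.lt x y) : x ≠ y := by
  letI := L; exact ne_of_lt h

lemma lo_lt_irrefl (L : LinearOrder S) (x : S) : ¬ L.lt x x := by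
  letI := L; exact lt_irrefl x

lemma ord_true (B : Biorder S) : B.ord true = B.li := rfl

lemma ord_false (B : Biorder S) : B.ord false = B.lj := rfl

variable (B : Biorder S)

lemma sgn_eq_one_iff (h : Bool) (a : S → ℕ) (s : S) :
    sgn B h a s = 1 ↔ (a s = 0 ∧ B.lab s = h) ∨ (a s = 1 ∧ B.lab s ≠ h) := by
  unfold sgn
  split_ifs with h1 h2
  · exact iff_of_true rfl h1
  · exact iff_of_false (by norm_num) h1
  · exact iff_of_false (by norm_num) h1

lemma sgn_eq_neg_one_iff (h : Bool) (a : S → ℕ) (s : S) :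
    sgn B h a s = -1 ↔ (a s = 1 ∧ B.lab s = h) ∨ (a s = 2 ∧ B.lab s ≠ h) := by
  unfold sgn
  split_ifs with h1 h2
  · refine iff_of_false (by norm_num) ?_
    rintro (⟨ha, hl⟩ | ⟨ha, hl⟩) <;> rcases h1 with ⟨ha', hl'⟩ | ⟨ha', hl'⟩ <;> simp_all
  · exact iff_of_true rfl h2
  · exact iff_of_false (by norm_num) h2

lemma sgn_cases (h : Bool) (a : S → ℕ) (s : S) :
    sgn B h a s = 1 ∨ sgn B h a s = 0 ∨ sgn B h a s = -1 := by
  unfold sgn; split_ifs <;> simp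

lemma sgn_congr (h : Bool) {a b : S → ℕ} {s : S} (hs : b s = a s) :
    sgn B h b s = sgn B h a s := by
  unfold sgn; rw [hs]

variable [Fintype S]

lemma G_le_epsB (h : Bool) (a : S → ℕ) (s : S) :
    G B h Finset.univ a s ≤ epsB B h Finset.univ a :=
  (Finset.le_fold_max _).mpr (Or.inr ⟨s, Finset.mem_univ s, le_refl _⟩)

lemma epsB_le (h : Bool) (a : S → ℕ) {z : ℤ} (h0 : 0 ≤ z)
    (hz : ∀ s, G B h Finset.univ a s ≤ z) : epsB B h Finset.univ a ≤ z :=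
  (Finset.fold_max_le _).mpr ⟨h0, fun s _ => hz s⟩

lemma sum_sgn_update (h : Bool) {a b : S → ℕ} {u : S} (hab : ∀ s, s ≠ u → b s = a s)
    (F : Finset S) :
    ∑ t ∈ F, sgn B h b t
      = (∑ t ∈ F, sgn B h a t) + (if u ∈ F then sgn B h b u - sgn B h a u else 0) := by
  by_cases hu : u ∈ F
  · rw [if_pos hu, ← Finset.add_sum_erase F (sgn B h b) hu,
      ← Finset.add_sum_erase F (sgn B h a) hu,
      Finset.sum_congr rfl (fun x hx => sgn_congr B h (hab x (Finset.ne_of_mem_erase hx)))]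
    ring
  · rw [if_neg hu, add_zero]
    exact Finset.sum_congr rfl fun x hx => sgn_congr B h (hab x (by rintro rfl; exact hu hx))

lemma G_update (h : Bool) {a b : S → ℕ} {u : S} (hab : ∀ s, s ≠ u → b s = a s) (s : S) :
    G B h Finset.univ b s
      = G B h Finset.univ a s
        - (if (B.ord h).le s u then sgn B h b u - sgn B h a u else 0) := by
  unfold G
  rw [sum_sgn_update B h hab]
  have : u ∈ Finset.univ.filter (fun t => (B.ord h).le s t) ↔ (B.ord h).le s u := by
    simp
  by_cases hsu : (B.ord h).le s u
  · rw [if_pos hsu, if_pos (this.mpr hsu)]; ring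
  · rw [if_neg hsu, if_neg (fun hc => hsu (this.mp hc))]; ring

lemma filter_le_split (L : LinearOrder S) {p q : S} (hpq : L.lt p q) :
    Finset.univ.filter (fun t => L.le p t)
      = Finset.univ.filter (fun t => L.le q t)
        ∪ Finset.univ.filter (fun t => L.le p t ∧ L.lt t q) := by
  letI := L
  ext x
  simp only [Finset.mem_filter, Finset.mem_univ, true_and, Finset.mem_union]
  constructor
  · intro hx
    by_cases hxq : q ≤ x
    · exact Or.inl hxq
    · exact Or.inr ⟨hx, not_le.mp hxq⟩
  · rintro (hx | ⟨hx, _⟩)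
    · exact le_trans (le_of_lt hpq) hx
    · exact hx

lemma filter_le_disjoint (L : LinearOrder S) (p q : S) :
    Disjoint (Finset.univ.filter (fun t => L.le q t))
      (Finset.univ.filter (fun t => L.le p t ∧ L.lt t q)) := by
  letI := L
  rw [Finset.disjoint_left]
  intro x hx1 hx2
  simp only [Finset.mem_filter, Finset.mem_univ, true_and] at hx1 hx2
  exact absurd hx1 (not_le.mpr hx2.2)

lemma G_diff (h : Bool) (a : S → ℕ) {p q : S} (hpq : (B.ord h).lt p q) :
    G B h Finset.univ a p
      = G B h Finset.univ a q
        - ∑ x ∈ Finset.univ.filter (fun t => (B.ord h).le p t ∧ (B.ord h).lt t q),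
            sgn B h a x := by
  unfold G
  rw [filter_le_split (B.ord h) hpq, Finset.sum_union (filter_le_disjoint (B.ord h) p q)]
  ring

lemma et_some_spec {h : Bool} {a b : S → ℕ} (hb : et B h Finset.univ a = some b) :
    ∃ u : S, b = Function.update a u (a u - 1) ∧ 0 < epsB B h Finset.univ a ∧
      G B h Finset.univ a u = epsB B h Finset.univ a ∧
      ∀ s, G B h Finset.univ a s = epsB B h Finset.univ a → (B.ord h).le s u := by
  unfold et goodElt at hb
  split at hb
  case isTrue hne =>
    rw [Option.map_some] at hb
    injection hb with hb
    refine ⟨@Finset.max' S (B.ord h) _ hne, hb.symm, ?_, ?_, ?_⟩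
    · have := Finset.mem_filter.mp (@Finset.max'_mem S (B.ord h) _ hne)
      exact this.2.1
    · have := Finset.mem_filter.mp (@Finset.max'_mem S (B.ord h) _ hne)
      exact this.2.2
    · intro s hs
      have h1 := (Finset.mem_filter.mp (@Finset.max'_mem S (B.ord h) _ hne)).2.1
      exact @Finset.le_max' S (B.ord h) _ s
        (Finset.mem_filter.mpr ⟨Finset.mem_univ s, h1, hs⟩)
  case isFalse hne => simp at hb

lemma et_eq_some {h : Bool} {a : S → ℕ} {w : S}
    (h1 : 0 < epsB B h Finset.univ a) (h2 : G B h Finset.univ a w = epsB B h Finset.univ a)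
    (h3 : ∀ s, G B h Finset.univ a s = epsB B h Finset.univ a → (B.ord h).le s w) :
    et B h Finset.univ a = some (Function.update a w (a w - 1)) := by
  have hwmem : w ∈ Finset.univ.filter
      (fun s => 0 < epsB B h Finset.univ a ∧ G B h Finset.univ a s = epsB B h Finset.univ a) :=
    Finset.mem_filter.mpr ⟨Finset.mem_univ w, h1, h2⟩
  have hne : (Finset.univ.filter
      (fun s => 0 < epsB B h Finset.univ a ∧
        G B h Finset.univ a s = epsB B h Finset.univ a)).Nonempty := ⟨w, hwmem⟩
  have hmax : @Finset.max' S (B.ord h) _ hne = w := by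
    letI := B.ord h
    apply le_antisymm
    · apply Finset.max'_le
      intro y hy
      exact h3 y (Finset.mem_filter.mp hy).2.2
    · exact Finset.le_max' _ w hwmem
  unfold et goodElt
  rw [dif_pos hne, hmax, Option.map_some]

lemma sgn_good {h : Bool} {a : S → ℕ} {u : S}
    (h1 : 0 < epsB B h Finset.univ a) (h2 : G B h Finset.univ a u = epsB B h Finset.univ a)
    (h3 : ∀ s, G B h Finset.univ a s = epsB B h Finset.univ a → (B.ord h).le s u) :
    sgn B h a u = -1 := by
  letI : LinearOrder S := B.ord h
  set U := Finset.univ.filter (fun x => (B.ord h).lt u x) with hU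
  have key : -(∑ t ∈ U, sgn B h a t) ≤ epsB B h Finset.univ a - 1 := by
    rcases U.eq_empty_or_nonempty with hUe | hUne
    · rw [hUe]; simp; omega
    · set w := U.min' hUne with hw
      have hwU : w ∈ U := U.min'_mem hUne
      have huw : (B.ord h).lt u w := (Finset.mem_filter.mp hwU).2
      have hFU : Finset.univ.filter (fun t => (B.ord h).le w t) = U := by
        ext x
        simp only [Finset.mem_filter, Finset.mem_univ, true_and, hU]
        constructor
        · intro hx; exact lt_of_lt_of_le huw hx
        · intro hx; exact U.min'_le x (Finset.mem_filter.mpr ⟨Finset.mem_univ x, hx⟩)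
      have hGw : G B h Finset.univ a w = -(∑ t ∈ U, sgn B h a t) := by
        unfold G; rw [hFU]
      have hlt : G B h Finset.univ a w ≠ epsB B h Finset.univ a := by
        intro he
        exact absurd (h3 w he) (not_le.mpr huw)
      have := G_le_epsB B h a w
      omega
  have hnotin : u ∉ U := by simp [hU]
  have hsplit : Finset.univ.filter (fun t => (B.ord h).le u t) = insert u U := by
    ext x
    simp only [Finset.mem_filter, Finset.mem_univ, true_and, hU, Finset.mem_insert]
    constructor
    · intro hx
      rcases eq_or_lt_of_le hx with he | hlt
      · exact Or.inl he.symm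
      · exact Or.inr hlt
    · rintro (rfl | hx)
      · exact le_refl x
      · exact le_of_lt hx
  have hGu : G B h Finset.univ a u = -(sgn B h a u + ∑ t ∈ U, sgn B h a t) := by
    unfold G; rw [hsplit, Finset.sum_insert hnotin]
  have := sgn_cases B h a u
  omega

lemma sum_le_neg_one {F : Finset S} (f : S → ℤ) {x : S} (hx : x ∈ F) (hfx : f x = -1)
    (hrest : ∀ y ∈ F.erase x, f y ≤ 0) : ∑ y ∈ F, f y ≤ -1 := by
  have h1 := Finset.add_sum_erase F f hx
  have h2 := Finset.sum_nonpos hrest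
  omega

lemma G_exists_pos (h : Bool) (a : S → ℕ) {p q : S} (hpq : (B.ord h).lt p q)
    (hlt : G B h Finset.univ a p < G B h Finset.univ a q) :
    ∃ x, (B.ord h).le p x ∧ (B.ord h).lt x q ∧ 0 < sgn B h a x := by
  by_contra hc
  push_neg at hc
  obtain ⟨W, hW, hWle⟩ : ∃ W : ℤ,
      G B h Finset.univ a p = G B h Finset.univ a q - W ∧ W ≤ 0 :=
    ⟨_, G_diff B h a hpq, Finset.sum_nonpos (fun y hy =>
      hc y (Finset.mem_filter.mp hy).2.1 (Finset.mem_filter.mp hy).2.2)⟩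
  omega

lemma G_drop (h : Bool) (a : S → ℕ) {p q : S} (hpq : (B.ord h).lt p q)
    (hp : sgn B h a p = -1)
    (hrest : ∀ y, (B.ord h).le p y → (B.ord h).lt y q → y ≠ p → sgn B h a y ≤ 0) :
    G B h Finset.univ a q ≤ G B h Finset.univ a p - 1 := by
  obtain ⟨W, hW, hWle⟩ : ∃ W : ℤ,
      G B h Finset.univ a p = G B h Finset.univ a q - W ∧ W ≤ -1 :=
    ⟨_, G_diff B h a hpq, sum_le_neg_one _
      (Finset.mem_filter.mpr ⟨Finset.mem_univ p, lo_le_refl _ p, hpq⟩) hp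
      (fun y hy => hrest y (Finset.mem_filter.mp (Finset.mem_of_mem_erase hy)).2.1
        (Finset.mem_filter.mp (Finset.mem_of_mem_erase hy)).2.2 (Finset.ne_of_mem_erase hy))⟩
  omega

lemma exists_pos_of_sum_pos {F : Finset S} {f : S → ℤ} (h : 1 ≤ ∑ x ∈ F, f x) :
    ∃ x ∈ F, 0 < f x := by
  by_contra hc
  push_neg at hc
  have h2 : ∑ x ∈ F, f x ≤ 0 := Finset.sum_nonpos hc
  omega

end Aux

/-- Lemma 4.11 of the paper (here `true` plays the role of the label `i` and `false` that
of `j`): if `a` is good, `ẽ_i a = b ≠ 0`, `ẽ_j a = c ≠ 0` and `ε_j(ẽ_i a) = ε_j(a)`, then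
`ẽ_i ẽ_j a = ẽ_j ẽ_i a ≠ 0` and `ε_i(ẽ_j a) = ε_i(a) + 1`. -/
theorem axiom_A3_for_good_configurations (S : Type) [Fintype S] (B : Biorder S)
    (a b c : S → ℕ) (ha : ∀ s, a s ≤ 2)
    (hgood : IsGoodOn B Finset.univ a)
    (hei : et B true Finset.univ a = some b)
    (hej : et B false Finset.univ a = some c)
    (heps : epsB B false Finset.univ b = epsB B false Finset.univ a) :
    et B true Finset.univ c = et B false Finset.univ b ∧
    et B true Finset.univ c ≠ none ∧
    epsB B true Finset.univ c = epsB B true Finset.univ a + 1 := by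
  classical
  obtain ⟨u, hbdef, hεpos, hGu, humax⟩ := et_some_spec B hei
  obtain ⟨v, hcdef, hepos, hGv, hvmax⟩ := et_some_spec B hej
  have hsgni_u : sgn B true a u = -1 := sgn_good B hεpos hGu humax
  have hsgnj_v : sgn B false a v = -1 := sgn_good B hepos hGv hvmax
  have hbu : ∀ s, s ≠ u → b s = a s := fun s hs => by
    rw [hbdef]; exact Function.update_of_ne hs _ _
  have hcv : ∀ s, s ≠ v → c s = a s := fun s hs => by
    rw [hcdef]; exact Function.update_of_ne hs _ _
  have hui : (a u = 1 ∧ B.lab u = true) ∨ (a u = 2 ∧ B.lab u ≠ true) :=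
    (sgn_eq_neg_one_iff B true a u).mp hsgni_u
  have hvj : (a v = 1 ∧ B.lab v = false) ∨ (a v = 2 ∧ B.lab v ≠ false) :=
    (sgn_eq_neg_one_iff B false a v).mp hsgnj_v
  have hbuval : b u = a u - 1 := by rw [hbdef]; simp
  have hcvval : c v = a v - 1 := by rw [hcdef]; simp
  have hsgnj_bu : sgn B false b u = sgn B false a u - 1 := by
    rcases hui with ⟨h1, h2⟩ | ⟨h1, h2⟩
    · have hb0 : b u = 0 := by omega
      unfold sgn; rw [hb0, h1, h2]; norm_num
    · have hl : B.lab u = false := by revert h2; cases B.lab u <;> simp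
      have hb1 : b u = 1 := by omega
      unfold sgn; rw [hb1, h1, hl]; norm_num
  have hsgni_cv : sgn B true c v = sgn B true a v - 1 := by
    rcases hvj with ⟨h1, h2⟩ | ⟨h1, h2⟩
    · have hc0 : c v = 0 := by omega
      unfold sgn; rw [hc0, h1, h2]; norm_num
    · have hl : B.lab v = true := by revert h2; cases B.lab v <;> simp
      have hc1 : c v = 1 := by omega
      unfold sgn; rw [hc1, h1, hl]; norm_num
  have hGb : ∀ s, G B false Finset.univ b s
      = G B false Finset.univ a s + (if (B.ord false).le s u then 1 else 0) := by
    intro s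
    rw [G_update B false hbu s, hsgnj_bu]
    split_ifs <;> ring
  have hGc : ∀ s, G B true Finset.univ c s
      = G B true Finset.univ a s + (if (B.ord true).le s v then 1 else 0) := by
    intro s
    rw [G_update B true hcv s, hsgni_cv]
    split_ifs <;> ring
  -- v is strictly greater than u in the j-order
  have hnotvu_j : ¬ (B.ord false).le v u := by
    intro hle
    have h1 : G B false Finset.univ b v = epsB B false Finset.univ a + 1 := by
      rw [hGb v, hGv, if_pos hle]
    have h2 := G_le_epsB B false b v
    rw [heps] at h2
    omega
  have huv_j : (B.ord false).lt u v := lo_lt_of_not_le _ hnotvu_j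
  have hne_uv : u ≠ v := fun hh => lo_lt_irrefl (B.ord false) u (hh ▸ huv_j)
  -- consequence of `heps`
  have hle_e1 : ∀ s, (B.ord false).le s u →
      G B false Finset.univ a s ≤ epsB B false Finset.univ a - 1 := by
    intro s hs
    have h1 : G B false Finset.univ b s = G B false Finset.univ a s + 1 := by
      rw [hGb s, if_pos hs]
    have h2 := G_le_epsB B false b s
    rw [heps] at h2
    omega
  -- no crossing: v is also strictly greater than u in the i-order
  have huv_i : (B.ord true).lt u v := by
    rcases lo_trichot (B.ord true) u v with hlt | heq | hgt
    · exact hlt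
    · exact absurd heq hne_uv
    · exfalso
      obtain ⟨hlabu, hlabv⟩ := B.compat u v hgt huv_j
      have hau : a u = 2 := by
        rcases hui with ⟨_, h2⟩ | ⟨h1, _⟩
        · rw [hlabu] at h2; exact absurd h2 (by simp)
        · exact h1
      have hav : a v = 2 := by
        rcases hvj with ⟨_, h2⟩ | ⟨h1, _⟩
        · rw [hlabv] at h2; exact absurd h2 (by simp)
        · exact h1
      have hsgnj_u : sgn B false a u = 0 := by
        unfold sgn; rw [hau, hlabu]; norm_num
      have hlt_G : G B false Finset.univ a u < G B false Finset.univ a v := by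
        have := hle_e1 u (lo_le_refl _ u)
        omega
      obtain ⟨x, hxu_le, hxv, hxpos⟩ := G_exists_pos B false a huv_j hlt_G
      have hx1 : sgn B false a x = 1 := by
        rcases sgn_cases B false a x with hh | hh | hh <;> omega
      have hxne_u : x ≠ u := by rintro rfl; omega
      have hxu : (B.ord false).lt u x := lo_lt_of_le_of_ne _ hxu_le hxne_u.symm
      rcases (sgn_eq_one_iff B false a x).mp hx1 with ⟨hx0, hxlab⟩ | ⟨hx1a, hxlab⟩
      · -- a x = 0 and Γ(x) = j
        rcases lo_trichot (B.ord true) x u with hxiu | hxeq | huix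
        · obtain ⟨_, hlx⟩ := B.compat u x hxiu hxu
          rw [hxlab] at hlx; exact absurd hlx (by simp)
        · exact hxne_u hxeq
        · exact hgood.2.1 ⟨x, Finset.mem_univ x, u, Finset.mem_univ u, Or.inl huix,
            Relation.TransGen.head ⟨Finset.mem_univ u, Finset.mem_univ v, Or.inl hgt⟩
              (Relation.TransGen.single ⟨Finset.mem_univ v, Finset.mem_univ x, Or.inr hxv⟩),
            by rw [hxlab, hlabu], by omega⟩
      · -- a x = 1 and Γ(x) = i
        have hxlab' : B.lab x = true := by revert hxlab; cases B.lab x <;> simp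
        have hxiu : (B.ord true).lt x u := by
          rcases lo_trichot (B.ord true) x u with hh | hh | hh
          · exact hh
          · exact absurd hh hxne_u
          · exfalso
            have hvx : (B.ord true).lt v x := lo_lt_trans _ hgt hh
            obtain ⟨hlx, _⟩ := B.compat x v hvx hxv
            rw [hxlab'] at hlx; exact absurd hlx (by simp)
        have hsgn_x : sgn B true a x = -1 :=
          (sgn_eq_neg_one_iff B true a x).mpr (Or.inl ⟨hx1a, hxlab'⟩)
        have hrest : ∀ y, (B.ord true).le x y → (B.ord true).lt y u → y ≠ x →
            sgn B true a y ≤ 0 := by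
          intro y hxy_le hyu hyne
          have hxy : (B.ord true).lt x y := lo_lt_of_le_of_ne _ hxy_le hyne.symm
          rcases sgn_cases B true a y with h1 | h1 | h1
          · exfalso
            rcases (sgn_eq_one_iff B true a y).mp h1 with ⟨hy0, hylab⟩ | ⟨hy1, hylab⟩
            · exact hgood.2.1 ⟨y, Finset.mem_univ y, x, Finset.mem_univ x, Or.inl hxy,
                Relation.TransGen.head ⟨Finset.mem_univ x, Finset.mem_univ u, Or.inr hxu⟩
                  (Relation.TransGen.single ⟨Finset.mem_univ u, Finset.mem_univ y, Or.inl hyu⟩),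
                by rw [hylab, hxlab'], by omega⟩
            · have hylab' : B.lab y = false := by revert hylab; cases B.lab y <;> simp
              rcases lo_trichot (B.ord false) y x with hjyx | hjeq | hjxy
              · exact hgood.1 ⟨y, Finset.mem_univ y, x, Finset.mem_univ x, hxy, hjyx, hy1, hx1a⟩
              · exact hyne hjeq
              · have huy : (B.ord false).lt u y := lo_lt_trans _ hxu hjxy
                obtain ⟨_, hly⟩ := B.compat u y hyu huy
                rw [hylab'] at hly; exact absurd hly (by simp)
          · omega
          · omega
        have hdrop := G_drop B true a hxiu hsgn_x hrest
        have hle_x := G_le_epsB B true a x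
        omega
  -- main case : u < v in both orders
  have hnotvu_i : ¬ (B.ord true).le v u := lo_not_le_of_lt _ huv_i
  have hGcu : G B true Finset.univ c u = epsB B true Finset.univ a + 1 := by
    rw [hGc u, hGu, if_pos (lo_le_of_lt _ huv_i)]
  have hepsc : epsB B true Finset.univ c = epsB B true Finset.univ a + 1 := by
    apply le_antisymm
    · apply epsB_le B true c (by omega)
      intro s
      rw [hGc s]
      have := G_le_epsB B true a s
      split_ifs <;> omega
    · rw [← hGcu]; exact G_le_epsB B true c u
  have hetc : et B true Finset.univ c = some (Function.update c u (c u - 1)) := by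
    apply et_eq_some
    · rw [hepsc]; omega
    · rw [hepsc, hGcu]
    · intro s hs
      rw [hepsc, hGc s] at hs
      by_cases hsv : (B.ord true).le s v
      · rw [if_pos hsv] at hs
        exact humax s (by omega)
      · rw [if_neg hsv, add_zero] at hs
        have := G_le_epsB B true a s
        omega
  have hetb : et B false Finset.univ b = some (Function.update b v (b v - 1)) := by
    apply et_eq_some
    · rw [heps]; exact hepos
    · rw [heps, hGb v, if_neg hnotvu_j, add_zero, hGv]
    · intro s hs
      rw [heps, hGb s] at hs
      by_cases hsu : (B.ord false).le s u
      · exact lo_le_of_lt _ (lo_lt_of_le_of_lt _ hsu huv_j)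
      · rw [if_neg hsu, add_zero] at hs
        exact hvmax s hs
  have hfuneq : Function.update c u (c u - 1) = Function.update b v (b v - 1) := by
    have h1 : c u = a u := hcv u hne_uv
    have h2 : b v = a v := hbu v hne_uv.symm
    rw [h1, h2, hbdef, hcdef]
    exact Function.update_comm hne_uv.symm _ _ _
  refine ⟨by rw [hetc, hetb, hfuneq], by rw [hetc]; exact Option.some_ne_none _, hepsc⟩

end BiorderCrystal
end
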